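/- arXiv:1807.04802 — 6 statements merged into one kernel-verified Lean document; each statement's English description precedes it below -/
import Mathlib

section
/- Let G be a bipartite graph with parts A and B, M a matching, and y a dual weight function with y(b) ≥ 0 for all b ∈ B and y(a) ≤ 0 for all a ∈ A. Suppose M is 1-feasible: for every edge (u,v), y(u)+y(v) ≤ c(u,v)+1, and for every matching edge (u,v), y(u)+y(v) ≥ c(u,v)−1. If M is a perfect matching (1-optimal) and M_opt is a minimum-cost perfect matching, then c(M) ≤ c(M_opt) + 2n, where n = |A| = |B|. -/
/-!
Both matchings are perfect, so summing `y(u) + y(v)` over the edges of either one gives the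
same total `y(A) + y(B)`. Tightness on the edges of `M` bounds `c(M)` above by this total plus
`n`, and feasibility on the edges of `Mopt` bounds `c(Mopt)` below by the total minus `n`.
-/

/-- A perfect matching of the bipartite graph with parts `A`, `B` and edge set `E`:
every vertex of `A` is the first endpoint of exactly one matching edge, and every
vertex of `B` is the second endpoint of exactly one matching edge. -/
def IsPerfectMatching {V : Type*} (A B : Finset V) (E M : Finset (V × V)) : Prop :=
  M ⊆ E ∧ (∀ a ∈ A, ∃! e, e ∈ M ∧ e.1 = a) ∧ (∀ b ∈ B, ∃! e, e ∈ M ∧ e.2 = b)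

theorem Finset.sum_comp_of_existsUnique {α β R : Type*} [AddCommMonoid R]
    {s : Finset α} {t : Finset β} (p : α → β) (hp : ∀ x ∈ s, p x ∈ t)
    (hu : ∀ b ∈ t, ∃! x, x ∈ s ∧ p x = b) (f : β → R) :
    ∑ x ∈ s, f (p x) = ∑ b ∈ t, f b := by
  refine Finset.sum_bij (fun x _ => p x) hp ?_ ?_ (fun _ _ => rfl)
  · intro x hx x' hx' hxx'
    exact (hu (p x) (hp x hx)).unique ⟨hx, rfl⟩ ⟨hx', hxx'.symm⟩
  · intro b hb
    obtain ⟨x, ⟨hx, hxb⟩, -⟩ := hu b hb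
    exact ⟨x, hx, hxb⟩

namespace IsPerfectMatching

variable {V R : Type*} [AddCommMonoid R] {A B : Finset V} {E M : Finset (V × V)}

theorem sum_fst (hE : ∀ e ∈ E, e.1 ∈ A) (hM : IsPerfectMatching A B E M) (f : V → R) :
    ∑ e ∈ M, f e.1 = ∑ a ∈ A, f a :=
  Finset.sum_comp_of_existsUnique Prod.fst (fun e he => hE e (hM.1 he)) hM.2.1 f

theorem sum_snd (hE : ∀ e ∈ E, e.2 ∈ B) (hM : IsPerfectMatching A B E M) (f : V → R) :
    ∑ e ∈ M, f e.2 = ∑ b ∈ B, f b :=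
  Finset.sum_comp_of_existsUnique Prod.snd (fun e he => hE e (hM.1 he)) hM.2.2 f

theorem card_eq (hE : ∀ e ∈ E, e.1 ∈ A) (hM : IsPerfectMatching A B E M) :
    M.card = A.card := by
  simpa using hM.sum_fst hE (fun _ => (1 : ℕ))

theorem sum_add_endpoints (hE : ∀ e ∈ E, e.1 ∈ A ∧ e.2 ∈ B) (hM : IsPerfectMatching A B E M)
    (y : V → R) : ∑ e ∈ M, (y e.1 + y e.2) = ∑ a ∈ A, y a + ∑ b ∈ B, y b := by
  rw [Finset.sum_add_distrib, hM.sum_fst (fun e he => (hE e he).1),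
    hM.sum_snd (fun e he => (hE e he).2)]

end IsPerfectMatching

theorem one_optimal_cost_le_general {V : Type*}
    (A B : Finset V) (E M Mopt : Finset (V × V))
    (c : V × V → ℤ) (y : V → ℤ) (n : ℕ)
    (hA : A.card = n)
    (hE : ∀ e ∈ E, e.1 ∈ A ∧ e.2 ∈ B)
    (hfeas1 : ∀ e ∈ E, y e.1 + y e.2 ≤ c e + 1)
    (hfeas2 : ∀ e ∈ M, c e - 1 ≤ y e.1 + y e.2)
    (hM : IsPerfectMatching A B E M)
    (hMopt : IsPerfectMatching A B E Mopt) :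
    ∑ e ∈ M, c e ≤ ∑ e ∈ Mopt, c e + 2 * n := by
  have hEA : ∀ e ∈ E, e.1 ∈ A := fun e he => (hE e he).1
  calc ∑ e ∈ M, c e ≤ ∑ e ∈ M, (y e.1 + y e.2 + 1) :=
        Finset.sum_le_sum fun e he => by linarith [hfeas2 e he]
    _ = ∑ e ∈ Mopt, (y e.1 + y e.2 - 1) + 2 * n := by
        rw [Finset.sum_add_distrib, Finset.sum_sub_distrib, hM.sum_add_endpoints hE,
          hMopt.sum_add_endpoints hE]
        simp only [Finset.sum_const, hM.card_eq hEA, hMopt.card_eq hEA, hA]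
        ring
    _ ≤ ∑ e ∈ Mopt, c e + 2 * n := by
        gcongr with e he
        linarith [hfeas1 e (hMopt.1 he)]

/-- If `M` is a `1`-optimal matching (a perfect matching with duals satisfying the
`1`-feasibility conditions) and `Mopt` is a minimum-cost perfect matching, then
`c(M) ≤ c(Mopt) + 2n`. -/
theorem one_optimal_cost_le {V : Type*} [DecidableEq V]
    (A B : Finset V) (E M Mopt : Finset (V × V))
    (c : V × V → ℤ) (y : V → ℤ) (n : ℕ)
    (hA : A.card = n) (hB : B.card = n) (hAB : Disjoint A B)
    (hE : ∀ e ∈ E, e.1 ∈ A ∧ e.2 ∈ B)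
    (hyB : ∀ b ∈ B, 0 ≤ y b) (hyA : ∀ a ∈ A, y a ≤ 0)
    (hfeas1 : ∀ e ∈ E, y e.1 + y e.2 ≤ c e + 1)
    (hfeas2 : ∀ e ∈ M, c e - 1 ≤ y e.1 + y e.2)
    (hM : IsPerfectMatching A B E M)
    (hMopt : IsPerfectMatching A B E Mopt)
    (hopt : ∀ M' : Finset (V × V), IsPerfectMatching A B E M' →
      ∑ e ∈ Mopt, c e ≤ ∑ e ∈ M', c e) :
    ∑ e ∈ M, c e ≤ ∑ e ∈ Mopt, c e + 2 * n :=
  one_optimal_cost_le_general A B E M Mopt c y n hA hE hfeas1 hfeas2 hM hMopt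
end

section
/- Let G be a bipartite graph with edge error values δ(u,v) ≥ 1 and an R-feasible matching M with duals y, meaning: y(u)+y(v) ≤ c(u,v)+δ(u,v) for every non-matching edge (u,v) and y(u)+y(v) ≥ c(u,v)−δ(u,v) for every matching edge. Define the slack s(u,v) = c(u,v)+δ(u,v)−y(u)−y(v) for non-matching edges and s(u,v) = y(u)+y(v)−c(u,v)+δ(u,v) for matching edges. Call an edge admissible if s(u,v) ≤ δ(u,v)/2. If P is a set of edges forming an alternating path or alternating cycle in the residual graph consisting only of admissible edges, then M' = M ⊕ P together with the same duals y is also R-feasible, and moreover every edge (u,v) of P has slack at least δ(u,v) with respect to M'. -/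
/-- The slack of edge `e` with respect to matching `M`, costs `c`, errors `δ`
and duals `y`: `c e + δ e - y e.1 - y e.2` for non-matching edges and
`y e.1 + y e.2 - c e + δ e` for matching edges. -/
def slack {V : Type*} [DecidableEq V] (M : Finset (V × V)) (c δ : V × V → ℝ)
    (y : V → ℝ) (e : V × V) : ℝ :=
  if e ∈ M then y e.1 + y e.2 - c e + δ e else c e + δ e - y e.1 - y e.2

section slack

variable {V : Type*} [DecidableEq V] {M P : Finset (V × V)} {c δ : V × V → ℝ} {y : V → ℝ}
  {e : V × V}

theorem slack_symmDiff_of_mem (he : e ∈ P) :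
    slack (symmDiff M P) c δ y e = 2 * δ e - slack M c δ y e := by
  by_cases hm : e ∈ M <;> simp [slack, Finset.mem_symmDiff, he, hm] <;> ring

theorem slack_symmDiff_of_notMem (he : e ∉ P) :
    slack (symmDiff M P) c δ y e = slack M c δ y e := by
  by_cases hm : e ∈ M <;> simp [slack, Finset.mem_symmDiff, he, hm]

end slack

theorem symmDiff_admissible_RFeasible_general {V : Type*} [DecidableEq V]
    (E M P : Finset (V × V)) (c δ : V × V → ℝ) (y : V → ℝ)
    (hδ : ∀ e ∈ E, 1 ≤ δ e) (hP : P ⊆ E)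
    (hfeas : ∀ e ∈ E, 0 ≤ slack M c δ y e)
    (hadm : ∀ e ∈ P, slack M c δ y e ≤ δ e / 2) :
    (∀ e ∈ E, 0 ≤ slack (symmDiff M P) c δ y e) ∧
    (∀ e ∈ P, δ e ≤ slack (symmDiff M P) c δ y e) := by
  refine ⟨fun e he => ?_, fun e he => ?_⟩
  · by_cases hp : e ∈ P
    · rw [slack_symmDiff_of_mem hp]
      linarith [hadm e hp, hδ e he]
    · rw [slack_symmDiff_of_notMem hp]
      exact hfeas e he
  · rw [slack_symmDiff_of_mem he]
    linarith [hadm e he, hδ e (hP he)]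

/-- If `M, y` is `R`-feasible (all slacks non-negative) and `P` is an alternating
path or cycle consisting only of admissible edges (slack at most `δ/2`), then
`M ⊕ P` with the same duals is again `R`-feasible, and every edge of `P` has slack
at least `δ` with respect to `M ⊕ P`. -/
theorem symmDiff_admissible_RFeasible {V : Type*} [DecidableEq V]
    (E M P : Finset (V × V)) (c δ : V × V → ℝ) (y : V → ℝ)
    (hδ : ∀ e ∈ E, 1 ≤ δ e) (hM : M ⊆ E) (hP : P ⊆ E)
    (hfeas : ∀ e ∈ E, 0 ≤ slack M c δ y e)
    (hadm : ∀ e ∈ P, slack M c δ y e ≤ δ e / 2) :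
    (∀ e ∈ E, 0 ≤ slack (symmDiff M P) c δ y e) ∧
    (∀ e ∈ P, δ e ≤ slack (symmDiff M P) c δ y e) :=
  symmDiff_admissible_RFeasible_general E M P c δ y hδ hP hfeas hadm
end

section
/- Let M be an R-feasible matching with duals y such that every free vertex b ∈ B has y(b) ≥ 0 and every free vertex a ∈ A has y(a) = 0. Let M_opt be any perfect matching. Then c(M) ≤ c(M_opt) + ∑_{(u,v) ∈ M ⊕ M_opt} δ(u,v). -/
/-- A matching: a set of edges (pairs in `A × B`) that are pairwise vertex disjoint. -/
def IsMatching {V : Type*} (M : Finset (V × V)) : Prop :=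
  ∀ e ∈ M, ∀ f ∈ M, e ≠ f → e.1 ≠ f.1 ∧ e.2 ≠ f.2

/-!
Write `w(u, v) = y(u) + y(v)`. Feasibility gives `c ≤ w + δ` on `M \ Mopt` and `w - δ ≤ c` on
`Mopt \ M`, so it suffices that `∑_M w ≤ ∑_Mopt w`. Since both are matchings, these sums are the
sums of `y` over the vertices they cover; `Mopt` covers every vertex, and the vertices it covers
beyond those of `M` are free, where `y ≥ 0`.
-/

namespace IsMatching

variable {V : Type*} {M : Finset (V × V)}

theorem injOn_fst (hM : IsMatching M) : Set.InjOn Prod.fst (M : Set (V × V)) :=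
  fun e he f hf hef => by_contra fun hne => (hM e he f hf hne).1 hef

theorem injOn_snd (hM : IsMatching M) : Set.InjOn Prod.snd (M : Set (V × V)) :=
  fun e he f hf hef => by_contra fun hne => (hM e he f hf hne).2 hef

end IsMatching

theorem Finset.sum_comp_le_sum_comp_of_injOn {α β : Type*} [DecidableEq β]
    {M N : Finset α} {p : α → β} {g : β → ℝ}
    (hpM : Set.InjOn p M) (hpN : Set.InjOn p N)
    (hcover : ∀ e ∈ M, ∃ f ∈ N, p f = p e)
    (hfree : ∀ f ∈ N, (∀ e ∈ M, p e ≠ p f) → 0 ≤ g (p f)) :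
    ∑ e ∈ M, g (p e) ≤ ∑ e ∈ N, g (p e) := by
  rw [← Finset.sum_image hpM, ← Finset.sum_image hpN]
  apply Finset.sum_le_sum_of_subset_of_nonneg
  · intro b hb
    obtain ⟨e, he, rfl⟩ := Finset.mem_image.mp hb
    obtain ⟨f, hf, hfe⟩ := hcover e he
    exact Finset.mem_image.mpr ⟨f, hf, hfe⟩
  · intro b hb hbM
    obtain ⟨f, hf, rfl⟩ := Finset.mem_image.mp hb
    exact hfree f hf fun e he hef => hbM (Finset.mem_image.mpr ⟨e, he, hef⟩)

theorem Finset.sum_le_sum_add_sum_symmDiff {α : Type*} [DecidableEq α]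
    {M N : Finset α} {c δ w : α → ℝ}
    (hw : ∑ e ∈ M, w e ≤ ∑ e ∈ N, w e)
    (hM : ∀ e ∈ M \ N, c e ≤ w e + δ e)
    (hN : ∀ e ∈ N \ M, w e - δ e ≤ c e) :
    ∑ e ∈ M, c e ≤ ∑ e ∈ N, c e + ∑ e ∈ symmDiff M N, δ e := by
  have hwdiff : ∑ e ∈ M \ N, w e ≤ ∑ e ∈ N \ M, w e := by
    have := Finset.sum_sdiff_sub_sum_sdiff (s₁ := M) (s₂ := N) (f := w)
    linarith
  have hcM := Finset.sum_le_sum hM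
  have hcN := Finset.sum_le_sum hN
  rw [Finset.sum_add_distrib] at hcM
  rw [Finset.sum_sub_distrib] at hcN
  rw [symmDiff_def, Finset.sup_eq_union, Finset.sum_union disjoint_sdiff_sdiff,
    ← Finset.sum_inter_add_sum_sdiff M N, ← Finset.sum_inter_add_sum_sdiff N M,
    Finset.inter_comm]
  linarith

section Feasibility

variable {V : Type*} [DecidableEq V] {M : Finset (V × V)} {c δ : V × V → ℝ} {y : V → ℝ}
  {e : V × V}

theorem cost_le_of_mem_of_slack_nonneg (he : e ∈ M) (h : 0 ≤ slack M c δ y e) :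
    c e ≤ y e.1 + y e.2 + δ e := by
  rw [slack, if_pos he] at h
  linarith

theorem le_cost_of_notMem_of_slack_nonneg (he : e ∉ M) (h : 0 ≤ slack M c δ y e) :
    y e.1 + y e.2 - δ e ≤ c e := by
  rw [slack, if_neg he] at h
  linarith

end Feasibility

theorem cost_le_opt_add_delta_general {V : Type*} [DecidableEq V]
    (A B : Finset V) (E M Mopt : Finset (V × V))
    (c δ : V × V → ℝ) (y : V → ℝ)
    (hE : ∀ e ∈ E, e.1 ∈ A ∧ e.2 ∈ B)
    (hM : M ⊆ E) (hMm : IsMatching M)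
    (hMopt : Mopt ⊆ E) (hMoptm : IsMatching Mopt)
    (hperfA : ∀ a ∈ A, ∃ e ∈ Mopt, e.1 = a)
    (hperfB : ∀ b ∈ B, ∃ e ∈ Mopt, e.2 = b)
    (hfeas : ∀ e ∈ E, 0 ≤ slack M c δ y e)
    (hfreeB : ∀ b ∈ B, (∀ e ∈ M, e.2 ≠ b) → 0 ≤ y b)
    (hfreeA : ∀ a ∈ A, (∀ e ∈ M, e.1 ≠ a) → y a = 0) :
    ∑ e ∈ M, c e ≤ ∑ e ∈ Mopt, c e + ∑ e ∈ symmDiff M Mopt, δ e := by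
  have hdualA : ∑ e ∈ M, y e.1 ≤ ∑ e ∈ Mopt, y e.1 :=
    Finset.sum_comp_le_sum_comp_of_injOn (IsMatching.injOn_fst hMm)
      (IsMatching.injOn_fst hMoptm)
      (fun e he => hperfA e.1 (hE e (hM he)).1)
      (fun f hf hfree => (hfreeA f.1 (hE f (hMopt hf)).1 hfree).ge)
  have hdualB : ∑ e ∈ M, y e.2 ≤ ∑ e ∈ Mopt, y e.2 :=
    Finset.sum_comp_le_sum_comp_of_injOn (IsMatching.injOn_snd hMm)
      (IsMatching.injOn_snd hMoptm)
      (fun e he => hperfB e.2 (hE e (hM he)).2)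
      (fun f hf hfree => hfreeB f.2 (hE f (hMopt hf)).2 hfree)
  refine Finset.sum_le_sum_add_sum_symmDiff (w := fun e => y e.1 + y e.2) ?_ ?_ ?_
  · simp only [Finset.sum_add_distrib]
    exact add_le_add hdualA hdualB
  · intro e he
    have heM := (Finset.mem_sdiff.mp he).1
    exact cost_le_of_mem_of_slack_nonneg heM (hfeas e (hM heM))
  · intro e he
    obtain ⟨heMopt, heM⟩ := Finset.mem_sdiff.mp he
    exact le_cost_of_notMem_of_slack_nonneg heM (hfeas e (hMopt heMopt))

/-- If `M, y` is an `R`-feasible matching with `y(b) ≥ 0` on free `B`-vertices and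
`y(a) = 0` on free `A`-vertices, and `Mopt` is any perfect matching, then
`c(M) ≤ c(Mopt) + ∑_{(u,v) ∈ M ⊕ Mopt} δ(u,v)`. -/
theorem cost_le_opt_add_delta {V : Type*} [DecidableEq V]
    (A B : Finset V) (E M Mopt : Finset (V × V))
    (c δ : V × V → ℝ) (y : V → ℝ) (n : ℕ)
    (hA : A.card = n) (hB : B.card = n) (hAB : Disjoint A B)
    (hE : ∀ e ∈ E, e.1 ∈ A ∧ e.2 ∈ B)
    (hδ : ∀ e ∈ E, 1 ≤ δ e)
    (hM : M ⊆ E) (hMm : IsMatching M)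
    (hMopt : Mopt ⊆ E) (hMoptm : IsMatching Mopt)
    (hperfA : ∀ a ∈ A, ∃ e ∈ Mopt, e.1 = a)
    (hperfB : ∀ b ∈ B, ∃ e ∈ Mopt, e.2 = b)
    (hfeas : ∀ e ∈ E, 0 ≤ slack M c δ y e)
    (hfreeB : ∀ b ∈ B, (∀ e ∈ M, e.2 ≠ b) → 0 ≤ y b)
    (hfreeA : ∀ a ∈ A, (∀ e ∈ M, e.1 ≠ a) → y a = 0) :
    ∑ e ∈ M, c e ≤ ∑ e ∈ Mopt, c e + ∑ e ∈ symmDiff M Mopt, δ e :=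
  cost_le_opt_add_delta_general A B E M Mopt c δ y hE hM hMm hMopt hMoptm hperfA hperfB hfeas hfreeB
    hfreeA
end

section
/- Let v ∈ B be a matched vertex in a bipartite residual graph, so that the unique matching edge (u,v) is the only residual edge directed into v. Then every edge of the compressed graph H directed into v must have the edge (u,v) as the last edge of its projection, and hence all such edges belong to the single piece containing (u,v); consequently the in-degree of v in H is at most the number of boundary/free-internal vertices of that piece, i.e., O(√r). -/
/-- In-degree bound in the compressed graph `H` for a matched vertex `v ∈ B`:
the unique residual edge into `v` is its matching edge `(u, v)` (hypothesis `hres`,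
`R` being the set of residual edges), every edge of `H` into `v` projects onto a
residual path ending with an edge into `v`, and projections stay within the piece of
their `H`-edge. Hence all `H`-edges into `v` lie in the single piece of `(u, v)`,
and the in-degree of `v` in `H` is at most the number of `H`-vertices of that piece,
i.e. at most `cst·√r`. -/
theorem indegree_of_B_vertex_le {V ι : Type*} [DecidableEq V] [DecidableEq ι]
    (EH R M : Finset (V × V)) (pieceG pieceOfH : V × V → ι)
    (pieceVerts : ι → Finset V) (proj : V × V → List (V × V))
    (u v : V) (r cst : ℝ)
    (hmatch : (u, v) ∈ M)
    (hres : ∀ f ∈ R, f.2 = v → f = (u, v))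
    (hprojR : ∀ e ∈ EH, ∀ f ∈ proj e, f ∈ R)
    (hprojpiece : ∀ e ∈ EH, ∀ f ∈ proj e, pieceG f = pieceOfH e)
    (hlast : ∀ e ∈ EH, e.2 = v → ∃ f ∈ proj e, f.2 = v)
    (hstart : ∀ e ∈ EH, e.1 ∈ pieceVerts (pieceOfH e))
    (hcard : ∀ j : ι, ((pieceVerts j).card : ℝ) ≤ cst * Real.sqrt r) :
    (∀ e ∈ EH, e.2 = v → pieceOfH e = pieceG (u, v)) ∧
    (((EH.filter fun e => e.2 = v).card : ℝ) ≤ cst * Real.sqrt r) := by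
  have hpiece : ∀ e ∈ EH, e.2 = v → pieceOfH e = pieceG (u, v) := by
    intro e he hev
    obtain ⟨f, hf, hfv⟩ := hlast e he hev
    have hfR := hprojR e he f hf
    have hfuv := hres f hfR hfv
    rw [← hfuv]
    exact (hprojpiece e he f hf).symm
  refine ⟨hpiece, ?_⟩
  have hcardle : (EH.filter fun e => e.2 = v).card ≤
      (pieceVerts (pieceG (u, v))).card := by
    apply Finset.card_le_card_of_injOn (fun e => e.1)
    · intro e he
      rw [Finset.mem_coe, Finset.mem_filter] at he
      have := hstart e he.1
      rwa [hpiece e he.1 he.2] at this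
    · intro e he e' he' h1
      rw [Finset.mem_coe, Finset.mem_filter] at he he'
      exact Prod.ext h1 (he.2.trans he'.2.symm)
  exact le_trans (Nat.cast_le.mpr hcardle) (hcard _)
end

section
/- Let v ∈ A be a matched boundary vertex lying on an admissible alternating path/cycle P whose edges are switched (M ← M ⊕ P), where the matching edge (v,v') incident to v lies on P and is admissible. If δ(v,v') ≥ 2√r, then after switching, every residual edge leaving v has slack at least 2√r; in particular v has no admissible outgoing edge in H (admissible meaning slack ≤ √r). -/
/-! Switching an edge of `P` moves it into or out of the matching, which flips the sign of
its reduced cost `c e - y e.1 - y e.2` in the slack; so its slacks before and after the switch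
add up to `2 δ e`. For `(v, v')`, the only edge of the matching `M ⊕ P` leaving `v`, this gives
a new slack of at least `2 · 2√r - √r = 3√r`. -/

theorem IsMatching.snd_eq_of_fst_eq {V : Type*} {M : Finset (V × V)} (hM : IsMatching M)
    {a b b' : V} (hb : (a, b) ∈ M) (hb' : (a, b') ∈ M) : b = b' := by
  by_contra hne
  exact (hM _ hb _ hb' (by simp [hne])).1 rfl

theorem slack_symmDiff_add_slack {V : Type*} [DecidableEq V] (M P : Finset (V × V))
    (c δ : V × V → ℝ) (y : V → ℝ) {e : V × V} (he : e ∈ P) :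
    slack (symmDiff M P) c δ y e + slack M c δ y e = 2 * δ e := by
  by_cases heM : e ∈ M
  · have : e ∉ symmDiff M P := by simp [Finset.mem_symmDiff, heM, he]
    simp only [slack, heM, this, if_true, if_false]
    ring
  · have : e ∈ symmDiff M P := by simp [Finset.mem_symmDiff, heM, he]
    simp only [slack, heM, this, if_true, if_false]
    ring

/-- After switching along an admissible alternating path/cycle `P` containing the
edge `(v, v')` (which becomes the matching edge of `v ∈ A` in `M ⊕ P`), if
`δ(v,v') ≥ 2√r` and `(v,v')` was admissible (slack at most `√r`) before switching,
then every residual edge leaving `v` (i.e. the matching edge of `v` in `M ⊕ P`) has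
slack at least `2√r`; in particular none is admissible (slack ≤ √r). -/
theorem no_admissible_out_edge_after_switch {V : Type*} [DecidableEq V]
    (M P : Finset (V × V)) (c δ : V × V → ℝ) (y : V → ℝ)
    (v v' : V) (r : ℝ)
    (hr : 0 < Real.sqrt r)
    (hmatch' : IsMatching (symmDiff M P))
    (hvP : (v, v') ∈ P) (hvM' : (v, v') ∈ symmDiff M P)
    (hadm : slack M c δ y (v, v') ≤ Real.sqrt r)
    (hδ : 2 * Real.sqrt r ≤ δ (v, v')) :
    ∀ b : V, (v, b) ∈ symmDiff M P →
      2 * Real.sqrt r ≤ slack (symmDiff M P) c δ y (v, b) ∧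
      ¬ slack (symmDiff M P) c δ y (v, b) ≤ Real.sqrt r := by
  intro b hb
  obtain rfl : b = v' := hmatch'.snd_eq_of_fst_eq hb hvM'
  have hsum := slack_symmDiff_add_slack M P c δ y hvP
  constructor <;> linarith
end

section
/- Suppose an algorithm maintains, before each augmentation i, an R-feasible matching M^{(i-1)} with duals y^i such that free vertices of A have dual 0 and free vertices of B have dual at least Δ_i, and such that c(M^{(i-1)}) = O(n) and ∑_{(u,v) ∈ M* ⊕ M^{(i-1)}} δ(u,v) = O(n) for an optimal perfect matching M* with c(M*) = O(n). Then |B_F^i| · Δ_i = O(n), where B_F^i is the set of free B-vertices before iteration i. -/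
/-!
Compare the dual weight `∑_{(u,v)} (y u + y v)` of `M` with that of the perfect matching `M*`.
`M*` covers every vertex and `M` misses exactly the free ones, so the difference is the dual
weight of the free vertices, `∑_{B_F} y ≥ |B_F| Δ`, as free `A`-vertices have dual `0`.
Nonnegative slacks on `M ⊕ M*` bound the same difference by
`c(M*) - c(M) + ∑_{M ⊕ M*} δ ≤ c(M*) + c(M) + ∑_{M ⊕ M*} δ = O(n)`: this is the per-path
estimate `Δ ≤ φ(P)` summed over the augmenting paths of `M ⊕ M*`.
-/

section

open Finset

variable {V : Type*}

theorem IsMatching.injOn_fst_s13 {M : Finset (V × V)} (hM : IsMatching M) :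
    Set.InjOn Prod.fst (M : Set (V × V)) := fun e he f hf h ↦ by
  by_contra hne
  exact (hM e he f hf hne).1 h

theorem IsMatching.injOn_snd_s13 {M : Finset (V × V)} (hM : IsMatching M) :
    Set.InjOn Prod.snd (M : Set (V × V)) := fun e he f hf h ↦ by
  by_contra hne
  exact (hM e he f hf hne).2 h

variable [DecidableEq V] {β : Type*} [AddCommMonoid β]

theorem sum_comp_add_sum_unmatched {M : Finset (V × V)} {A : Finset V} {p : V × V → V}
    (hp : Set.InjOn p M) (hMA : ∀ e ∈ M, p e ∈ A) (f : V → β) :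
    ∑ e ∈ M, f (p e) + ∑ a ∈ A with ∀ e ∈ M, p e ≠ a, f a = ∑ a ∈ A, f a := by
  have himage : M.image p = {a ∈ A | ¬ ∀ e ∈ M, p e ≠ a} := by
    ext a
    simp only [mem_image, mem_filter, not_forall, not_not]
    constructor
    · rintro ⟨e, he, rfl⟩
      exact ⟨hMA e he, e, he, rfl⟩
    · rintro ⟨-, e, he, rfl⟩
      exact ⟨e, he, rfl⟩
  rw [← sum_image hp, himage, sum_filter_not_add_sum_filter]

theorem IsMatching.sum_dual_add_sum_unmatched {M : Finset (V × V)} {A B : Finset V}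
    (hM : IsMatching M) (hMAB : ∀ e ∈ M, e.1 ∈ A ∧ e.2 ∈ B) (y : V → β) :
    ∑ e ∈ M, (y e.1 + y e.2)
        + (∑ a ∈ A with ∀ e ∈ M, e.1 ≠ a, y a
          + ∑ b ∈ B with ∀ e ∈ M, e.2 ≠ b, y b)
      = ∑ a ∈ A, y a + ∑ b ∈ B, y b := by
  rw [← sum_comp_add_sum_unmatched hM.injOn_fst_s13 (fun e he ↦ (hMAB e he).1) y,
    ← sum_comp_add_sum_unmatched hM.injOn_snd_s13 (fun e he ↦ (hMAB e he).2) y, sum_add_distrib]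
  abel

theorem sum_dual_sub_sum_dual_le_of_slack_nonneg {M M' : Finset (V × V)} {c δ : V × V → ℝ}
    {y : V → ℝ} (hslack : ∀ e ∈ symmDiff M M', 0 ≤ slack M c δ y e) :
    ∑ e ∈ M', (y e.1 + y e.2) - ∑ e ∈ M, (y e.1 + y e.2)
      ≤ ∑ e ∈ M', c e - ∑ e ∈ M, c e + ∑ e ∈ symmDiff M M', δ e := by
  have hnew :
      ∑ e ∈ M' \ M, (y e.1 + y e.2) ≤ ∑ e ∈ M' \ M, c e + ∑ e ∈ M' \ M, δ e := by
    rw [← sum_add_distrib]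
    refine sum_le_sum fun e he ↦ ?_
    have := hslack e (mem_symmDiff.2 (Or.inr (mem_sdiff.1 he)))
    rw [slack, if_neg (mem_sdiff.1 he).2] at this
    linarith
  have hold :
      ∑ e ∈ M \ M', c e - ∑ e ∈ M \ M', δ e ≤ ∑ e ∈ M \ M', (y e.1 + y e.2) := by
    rw [← sum_sub_distrib]
    refine sum_le_sum fun e he ↦ ?_
    have := hslack e (mem_symmDiff.2 (Or.inl (mem_sdiff.1 he)))
    rw [slack, if_pos (mem_sdiff.1 he).1] at this
    linarith
  rw [← sum_sdiff_sub_sum_sdiff, ← sum_sdiff_sub_sum_sdiff (s₁ := M),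
    symmDiff_def, sup_eq_union, sum_union disjoint_sdiff_sdiff]
  linarith

end

theorem free_count_mul_dual_le_general {V : Type*} [DecidableEq V]
    (A B : Finset V) (E M Mstar : Finset (V × V))
    (c δ : V × V → ℝ) (y : V → ℝ) (n : ℕ) (Δ C₁ C₂ C₃ : ℝ)
    (hE : ∀ e ∈ E, e.1 ∈ A ∧ e.2 ∈ B)
    (hc : ∀ e ∈ E, 0 ≤ c e)
    (hM : M ⊆ E) (hMm : IsMatching M)
    (hMs : Mstar ⊆ E) (hMsm : IsMatching Mstar)
    (hperfA : ∀ a ∈ A, ∃ e ∈ Mstar, e.1 = a)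
    (hperfB : ∀ b ∈ B, ∃ e ∈ Mstar, e.2 = b)
    (hfeas : ∀ e ∈ E, 0 ≤ slack M c δ y e)
    (hfreeA : ∀ a ∈ A, (∀ e ∈ M, e.1 ≠ a) → y a = 0)
    (hfreeB : ∀ b ∈ B, (∀ e ∈ M, e.2 ≠ b) → Δ ≤ y b)
    (hcM : ∑ e ∈ M, c e ≤ C₁ * n)
    (hδsum : ∑ e ∈ symmDiff M Mstar, δ e ≤ C₂ * n)
    (hcMs : ∑ e ∈ Mstar, c e ≤ C₃ * n) :
    ((B.filter fun b => ∀ e ∈ M, e.2 ≠ b).card : ℝ) * Δ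
      ≤ (C₁ + C₂ + C₃) * n := by
  have hcount : ((B.filter fun b => ∀ e ∈ M, e.2 ≠ b).card : ℝ) * Δ
      ≤ ∑ b ∈ B with ∀ e ∈ M, e.2 ≠ b, y b := by
    rw [← nsmul_eq_mul]
    exact Finset.card_nsmul_le_sum _ _ _ fun b hb ↦
      (Finset.mem_filter.1 hb).elim (hfreeB b)
  have hfreeA_sum : ∑ a ∈ A with ∀ e ∈ M, e.1 ≠ a, y a = 0 :=
    Finset.sum_eq_zero fun a ha ↦ (Finset.mem_filter.1 ha).elim (hfreeA a)
  have hperf_sum : ∑ a ∈ A with ∀ e ∈ Mstar, e.1 ≠ a, y a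
      + ∑ b ∈ B with ∀ e ∈ Mstar, e.2 ≠ b, y b = 0 := by
    rw [Finset.filter_false_of_mem fun a ha ↦ by simpa using hperfA a ha,
      Finset.filter_false_of_mem fun b hb ↦ by simpa using hperfB b hb]
    simp
  have hdualM := hMm.sum_dual_add_sum_unmatched (fun e he ↦ hE e (hM he)) y
  have hdualMs := hMsm.sum_dual_add_sum_unmatched (fun e he ↦ hE e (hMs he)) y
  have hslack := sum_dual_sub_sum_dual_le_of_slack_nonneg (M' := Mstar)
    fun e he ↦ hfeas e (Finset.union_subset hM hMs (Finset.symmDiff_subset_union he))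
  have hcM_nonneg : 0 ≤ ∑ e ∈ M, c e := Finset.sum_nonneg fun e he ↦ hc e (hM he)
  linarith

/-- If an algorithm maintains an `R`-feasible matching `M` with duals `y` where free
`A`-vertices have dual `0`, free `B`-vertices have dual at least `Δ`, with
`c(M) ≤ C₁·n`, `∑_{M ⊕ M*} δ ≤ C₂·n` and `c(M*) ≤ C₃·n` for an optimal perfect
matching `M*`, then `|B_F|·Δ = O(n)`. -/
theorem free_count_mul_dual_le {V : Type*} [DecidableEq V]
    (A B : Finset V) (E M Mstar : Finset (V × V))
    (c δ : V × V → ℝ) (y : V → ℝ) (n : ℕ) (Δ C₁ C₂ C₃ : ℝ)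
    (hAB : Disjoint A B) (hA : A.card = n) (hB : B.card = n)
    (hE : ∀ e ∈ E, e.1 ∈ A ∧ e.2 ∈ B)
    (hc : ∀ e ∈ E, 0 ≤ c e) (hΔ : 0 ≤ Δ) (hC₁ : 0 ≤ C₁)
    (hM : M ⊆ E) (hMm : IsMatching M)
    (hMs : Mstar ⊆ E) (hMsm : IsMatching Mstar)
    (hperfA : ∀ a ∈ A, ∃ e ∈ Mstar, e.1 = a)
    (hperfB : ∀ b ∈ B, ∃ e ∈ Mstar, e.2 = b)
    (hfeas : ∀ e ∈ E, 0 ≤ slack M c δ y e)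
    (hfreeA : ∀ a ∈ A, (∀ e ∈ M, e.1 ≠ a) → y a = 0)
    (hfreeB : ∀ b ∈ B, (∀ e ∈ M, e.2 ≠ b) → Δ ≤ y b)
    (hcM : ∑ e ∈ M, c e ≤ C₁ * n)
    (hδsum : ∑ e ∈ symmDiff M Mstar, δ e ≤ C₂ * n)
    (hcMs : ∑ e ∈ Mstar, c e ≤ C₃ * n) :
    ((B.filter fun b => ∀ e ∈ M, e.2 ≠ b).card : ℝ) * Δ
      ≤ (C₁ + C₂ + C₃) * n :=
  free_count_mul_dual_le_general A B E M Mstar c δ y n Δ C₁ C₂ C₃ hE hc hM hMm hMs hMsm hperfA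
    hperfB hfeas hfreeA hfreeB hcM hδsum hcMs
end
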